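/- There exists a ℂ-algebra automorphism σ of the Weyl algebra Aₙ(ℂ) (the Fourier transform) such that for every i, σ sends the element of Aₙ(ℂ) given by the multiplication operator xᵢ to the element given by ∂ᵢ, and sends the element given by ∂ᵢ to the element given by −xᵢ. (Paper's Example 5.1.4.) -/

import Mathlib

open MvPolynomial

/-- The Weyl algebra `Aₙ(ℂ)`, realized as the `ℂ`-subalgebra of
`Module.End ℂ (MvPolynomial (Fin n) ℂ)` generated by the multiplication operators
`xᵢ` (multiplication by the variable `X i`) and the formal partial derivative
operators `∂ᵢ = pderiv i`. -/
noncomputable def WeylAlgebra (n : ℕ) :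
    Subalgebra ℂ (Module.End ℂ (MvPolynomial (Fin n) ℂ)) :=
  Algebra.adjoin ℂ
    ((Set.range fun i : Fin n =>
        (LinearMap.mulLeft ℂ (X i) : Module.End ℂ (MvPolynomial (Fin n) ℂ))) ∪
     (Set.range fun i : Fin n =>
        ((pderiv i).toLinearMap : Module.End ℂ (MvPolynomial (Fin n) ℂ))))

/-- The multiplication operator `xᵢ`, as an element of the Weyl algebra. -/
noncomputable def weylX (n : ℕ) (i : Fin n) : WeylAlgebra n :=
  ⟨LinearMap.mulLeft ℂ (X i), Algebra.subset_adjoin (Set.mem_union_left _ ⟨i, rfl⟩)⟩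

/-- The partial-derivative operator `∂ᵢ`, as an element of the Weyl algebra. -/
noncomputable def weylP (n : ℕ) (i : Fin n) : WeylAlgebra n :=
  ⟨(pderiv i).toLinearMap, Algebra.subset_adjoin (Set.mem_union_right _ ⟨i, rfl⟩)⟩

/-!
The Fock pairing `⟨f, g⟩ = ∑ α! f_α g_α` makes `xᵢ` and `∂ᵢ` adjoint to each other, and taking
adjoints with respect to a nondegenerate pairing is an anti-isomorphism of any algebra of
operators closed under adjoints in both directions. Twisting the pairing by the heat flow
`E_c = exp (c Δ / 2)`, which conjugates `xᵢ` into `xᵢ + c ∂ᵢ` and commutes with `∂ᵢ`, gives the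
pairings `B₁(f, g) = ⟨E₁ f, g⟩` and `B₂(f, g) = ⟨E₋₁ f, E₋₁ g⟩`. The `B₁`-adjoint sends
`x ↦ x + ∂`, `∂ ↦ x`, and the `B₂`-adjoint sends `∂ ↦ x + ∂`, `x ↦ -x`, so the first followed by
the inverse of the second is an automorphism with `x ↦ ∂` and `∂ ↦ -x`.
-/

namespace LinearMap

variable {R M : Type*} [CommRing R] [AddCommGroup M] [Module R M] {B : LinearMap.BilinForm R M}

lemma Nondegenerate.compl₁₂_of_bijective (hB : B.Nondegenerate) {f g : M →ₗ[R] M}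
    (hf : Function.Bijective f) (hg : Function.Bijective g) : (B.compl₁₂ f g).Nondegenerate := by
  refine ⟨fun x hx => (map_eq_zero_iff f hf.1).mp (hB.1 _ fun z => ?_),
    fun y hy => (map_eq_zero_iff g hg.1).mp (hB.2 _ fun z => ?_)⟩
  · obtain ⟨y, rfl⟩ := hg.2 z
    exact hx y
  · obtain ⟨x, rfl⟩ := hf.2 z
    exact hy x

lemma IsAdjointPair.compl₁₂ {e₁ e₂ : M →ₗ[R] M} {a b a' b' : M → M}
    (h₁ : ∀ x, e₁ (a x) = a' (e₁ x)) (h : IsAdjointPair B B a' b')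
    (h₂ : ∀ y, b' (e₂ y) = e₂ (b y)) :
    IsAdjointPair (B.compl₁₂ e₁ e₂) (B.compl₁₂ e₁ e₂) a b := fun x y => by
  simp only [compl₁₂_apply, h₁, h _ _, h₂]

lemma isAdjointPair_flip_iff {f g : M → M} :
    IsAdjointPair B.flip B.flip g f ↔ IsAdjointPair B B f g :=
  ⟨fun h x y => (h y x).symm, fun h x y => (h y x).symm⟩

lemma isAdjointPair_algebraMap (r : R) :
    IsAdjointPair B B (algebraMap R (Module.End R M) r) (algebraMap R (Module.End R M) r) := by
  simpa [Algebra.algebraMap_eq_smul_one] using isAdjointPair_one.smul r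

lemma IsAdjointPair.right_unique (hB : B.Nondegenerate) {a b b' : Module.End R M}
    (h : IsAdjointPair B B a b) (h' : IsAdjointPair B B a b') : b = b' :=
  B.flip.isAdjointPair_unique_of_nondegenerate hB.flip a b b'
    (isAdjointPair_flip_iff.mpr h) (isAdjointPair_flip_iff.mpr h')

lemma exists_isAdjointPair_of_mem_adjoin {s : Set (Module.End R M)}
    (hs : ∀ a ∈ s, ∃ b ∈ Algebra.adjoin R s, IsAdjointPair B B a b)
    {a : Module.End R M} (ha : a ∈ Algebra.adjoin R s) :
    ∃ b ∈ Algebra.adjoin R s, IsAdjointPair B B a b := by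
  induction ha using Algebra.adjoin_induction with
  | mem a ha => exact hs a ha
  | algebraMap r => exact ⟨_, Subalgebra.algebraMap_mem _ r, isAdjointPair_algebraMap r⟩
  | add a a' _ _ ih ih' =>
    obtain ⟨b, hb, h⟩ := ih
    obtain ⟨b', hb', h'⟩ := ih'
    exact ⟨b + b', add_mem hb hb', h.add h'⟩
  | mul a a' _ _ ih ih' =>
    obtain ⟨b, hb, h⟩ := ih
    obtain ⟨b', hb', h'⟩ := ih'
    exact ⟨b' * b, mul_mem hb' hb, h.mul h'⟩

lemma exists_isAdjointPair_of_mem_adjoin' {s : Set (Module.End R M)}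
    (hs : ∀ b ∈ s, ∃ a ∈ Algebra.adjoin R s, IsAdjointPair B B a b)
    {b : Module.End R M} (hb : b ∈ Algebra.adjoin R s) :
    ∃ a ∈ Algebra.adjoin R s, IsAdjointPair B B a b := by
  obtain ⟨a, ha, h⟩ := exists_isAdjointPair_of_mem_adjoin (B := B.flip)
    (fun b hb => (hs b hb).imp fun _ => And.imp_right isAdjointPair_flip_iff.mpr) hb
  exact ⟨a, ha, isAdjointPair_flip_iff.mp h⟩

variable (B) (A : Subalgebra R (Module.End R M)) (hB : B.Nondegenerate)
  (hA : ∀ a ∈ A, ∃ b ∈ A, IsAdjointPair B B a b)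

noncomputable def adjointAlgHom : A →ₐ[R] Aᵐᵒᵖ :=
  let adj (a : A) : A := ⟨(hA a a.2).choose, (hA a a.2).choose_spec.1⟩
  have adj_eq {a b : A} (h : IsAdjointPair B B a b) : adj a = b :=
    Subtype.ext ((hA a a.2).choose_spec.2.right_unique hB h)
  have spec (a : A) : IsAdjointPair B B a (adj a) := (hA a a.2).choose_spec.2
  { toFun a := .op (adj a)
    map_one' := congrArg _ (adj_eq isAdjointPair_one)
    map_mul' a a' := congrArg _ (adj_eq ((spec a).mul (spec a')))
    map_zero' := congrArg _ (adj_eq isAdjointPair_zero)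
    map_add' a a' := congrArg _ (adj_eq ((spec a).add (spec a')))
    commutes' r := congrArg _ (adj_eq (isAdjointPair_algebraMap r)) }

lemma isAdjointPair_adjointAlgHom (a : A) :
    IsAdjointPair B B a (adjointAlgHom B A hB hA a).unop :=
  (hA a a.2).choose_spec.2

lemma adjointAlgHom_apply_eq {a b : A} (h : IsAdjointPair B B a b) :
    adjointAlgHom B A hB hA a = .op b :=
  congrArg _ (Subtype.ext ((isAdjointPair_adjointAlgHom B A hB hA a).right_unique hB h))

lemma adjointAlgHom_bijective (hA' : ∀ b ∈ A, ∃ a ∈ A, IsAdjointPair B B a b) :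
    Function.Bijective (adjointAlgHom B A hB hA) := by
  refine ⟨fun a a' h => Subtype.ext ?_, fun b => ?_⟩
  · refine B.isAdjointPair_unique_of_nondegenerate hB _ _ _
      (isAdjointPair_adjointAlgHom B A hB hA a) ?_
    rw [h]
    exact isAdjointPair_adjointAlgHom B A hB hA a'
  · obtain ⟨a, ha, h⟩ := hA' b.unop b.unop.2
    exact ⟨⟨a, ha⟩, adjointAlgHom_apply_eq B A hB hA h⟩

noncomputable def adjointAlgEquiv (hA' : ∀ b ∈ A, ∃ a ∈ A, IsAdjointPair B B a b) :
    A ≃ₐ[R] Aᵐᵒᵖ :=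
  .ofBijective _ (adjointAlgHom_bijective B A hB hA hA')

lemma adjointAlgEquiv_apply_eq (hA' : ∀ b ∈ A, ∃ a ∈ A, IsAdjointPair B B a b) {a b : A}
    (h : IsAdjointPair B B a b) : adjointAlgEquiv B A hB hA hA' a = .op b :=
  adjointAlgHom_apply_eq B A hB hA h

end LinearMap

namespace MvPolynomial

open LinearMap (IsAdjointPair)

variable {σ R : Type*} [CommRing R]

lemma pderiv_pderiv_comm (i j : σ) (f : MvPolynomial σ R) :
    pderiv i (pderiv j f) = pderiv j (pderiv i f) := by
  ext m
  simp only [coeff_pderiv, add_right_comm m (Finsupp.single j 1) (Finsupp.single i 1)]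
  classical
  by_cases h : i = j
  · subst h; rfl
  · simp [h, Ne.symm h]
    ring

variable (R) in
noncomputable abbrev mulX (i : σ) : Module.End R (MvPolynomial σ R) := LinearMap.mulLeft R (X i)

variable (R) in
noncomputable abbrev pderivOp (i : σ) : Module.End R (MvPolynomial σ R) := (pderiv i).toLinearMap

variable (σ) in
noncomputable def shiftedX (c : R) (i : σ) : Module.End R (MvPolynomial σ R) :=
  mulX R i + c • pderivOp R i

lemma shiftedX_apply (c : R) (i : σ) (f : MvPolynomial σ R) :
    shiftedX σ c i f = X i * f + c • pderiv i f := rfl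

lemma shiftedX_mul_comm (c : R) (i j : σ) :
    shiftedX σ c i * shiftedX σ c j = shiftedX σ c j * shiftedX σ c i := by
  refine LinearMap.ext fun f => ?_
  simp only [Module.End.mul_apply, shiftedX_apply, map_add, pderiv_mul, smul_eq_C_mul,
    pderiv_C, pderiv_pderiv_comm i j]
  by_cases h : i = j
  · subst h; ring
  · simp only [pderiv_X_of_ne h, pderiv_X_of_ne (Ne.symm h)]
    ring

variable (σ) in
noncomputable abbrev shiftAlgebra (c : R) : Subalgebra R (Module.End R (MvPolynomial σ R)) :=
  Algebra.adjoin R (Set.range (shiftedX σ c))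

instance (c : R) : IsMulCommutative (shiftAlgebra σ c) :=
  Algebra.isMulCommutative_adjoin R (by rintro _ ⟨i, rfl⟩ _ ⟨j, rfl⟩; exact shiftedX_mul_comm c i j)

open scoped IsMulCommutative in
variable (σ) in
noncomputable def shiftEval (c : R) : MvPolynomial σ R →ₐ[R] shiftAlgebra σ c :=
  aeval fun i => ⟨shiftedX σ c i, Algebra.subset_adjoin ⟨i, rfl⟩⟩

variable (σ) in
/-- `heatFlow σ c f = f(x + c ∂) · 1`, which is `exp (c Δ / 2) f`; evaluating at the commuting
operators `xᵢ + c ∂ᵢ` makes `heatFlow_X_mul` hold by construction. -/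
noncomputable def heatFlow (c : R) : Module.End R (MvPolynomial σ R) where
  toFun f := (shiftEval σ c f : Module.End R (MvPolynomial σ R)) 1
  map_add' f g := by simp
  map_smul' a f := by simp

lemma heatFlow_C (c a : R) : heatFlow σ c (C a) = C a := by
  simp [heatFlow, Algebra.algebraMap_eq_smul_one, smul_eq_C_mul]

lemma heatFlow_X_mul (c : R) (i : σ) (f : MvPolynomial σ R) :
    heatFlow σ c (X i * f) = shiftedX σ c i (heatFlow σ c f) := by
  simp [heatFlow, shiftEval]

lemma heatFlow_pderiv (c : R) (i : σ) (f : MvPolynomial σ R) :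
    heatFlow σ c (pderiv i f) = pderiv i (heatFlow σ c f) := by
  induction f using MvPolynomial.induction_on with
  | C a => simp [heatFlow_C]
  | add p q hp hq => simp only [map_add, hp, hq]
  | mul_X p j hp =>
    rw [mul_comm, heatFlow_X_mul, shiftedX_apply, pderiv_mul, map_add, heatFlow_X_mul,
      shiftedX_apply, hp, map_add, Derivation.map_smul, pderiv_mul, pderiv_pderiv_comm i j]
    classical
    by_cases h : i = j
    · subst h; simp [add_assoc]
    · simp [pderiv_X_of_ne (Ne.symm h)]

lemma heatFlow_neg_heatFlow (c : R) (f : MvPolynomial σ R) :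
    heatFlow σ (-c) (heatFlow σ c f) = f := by
  induction f using MvPolynomial.induction_on with
  | C a => simp [heatFlow_C]
  | add p q hp hq => simp only [map_add, hp, hq]
  | mul_X p j hp =>
    rw [mul_comm, heatFlow_X_mul, shiftedX_apply, map_add, heatFlow_X_mul, shiftedX_apply, hp,
      map_smul, heatFlow_pderiv, hp, neg_smul, neg_add_cancel_right]

lemma heatFlow_bijective (c : R) : Function.Bijective (heatFlow σ c) :=
  Function.bijective_iff_has_inverse.mpr ⟨heatFlow σ (-c), heatFlow_neg_heatFlow c,
    fun f => by simpa using heatFlow_neg_heatFlow (-c) f⟩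

section Fock

variable [Fintype σ]

def factorialWeight (α : σ →₀ ℕ) : ℕ := ∏ j, (α j).factorial

lemma factorialWeight_add_single (α : σ →₀ ℕ) (i : σ) :
    factorialWeight (α + Finsupp.single i 1) = (α i + 1) * factorialWeight α := by
  classical
  have key : ∀ j, ((α + Finsupp.single i 1 : σ →₀ ℕ) j).factorial
      = (if j = i then α j + 1 else 1) * (α j).factorial := by
    intro j
    by_cases h : j = i
    · subst h; simp [Nat.factorial_succ]
    · simp [h]
  simp only [factorialWeight, key, Finset.prod_mul_distrib, Fintype.prod_ite_eq']

variable (σ R) in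
noncomputable def fockForm : LinearMap.BilinForm R (MvPolynomial σ R) :=
  (basisMonomials σ R).constr R fun α => (factorialWeight α : R) • lcoeff R α

lemma fockForm_monomial (α : σ →₀ ℕ) (a : R) (g : MvPolynomial σ R) :
    fockForm σ R (monomial α a) g = a * factorialWeight α * coeff α g := by
  have h : monomial α 1 = basisMonomials σ R α := by rw [coe_basisMonomials]
  rw [← mul_one a, ← smul_eq_mul, ← smul_monomial, map_smul, h, fockForm, Module.Basis.constr_basis]
  simp [mul_assoc]

lemma fockForm_comm (f g : MvPolynomial σ R) : fockForm σ R f g = fockForm σ R g f := by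
  classical
  induction f using induction_on' generalizing g with
  | add p q hp hq => simp only [map_add, LinearMap.add_apply, hp, hq]
  | monomial α a =>
    induction g using induction_on' with
    | add p q hp hq => simp only [map_add, LinearMap.add_apply, hp, hq]
    | monomial β b =>
      rw [fockForm_monomial, fockForm_monomial, coeff_monomial, coeff_monomial]
      by_cases h : α = β
      · subst h; simp only [if_true]; ring
      · simp [h, Ne.symm h]

lemma fockForm_X_mul (i : σ) (f g : MvPolynomial σ R) :
    fockForm σ R (X i * f) g = fockForm σ R f (pderiv i g) := by
  classical
  induction f using induction_on' with
  | add p q hp hq => simp only [mul_add, map_add, LinearMap.add_apply, hp, hq]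
  | monomial α a =>
    rw [← pow_one (X i), ← monomial_single_add, fockForm_monomial, fockForm_monomial,
      coeff_pderiv, add_comm, factorialWeight_add_single]
    push_cast
    ring

lemma isAdjointPair_fockForm_X (i : σ) :
    IsAdjointPair (fockForm σ R) (fockForm σ R) (mulX R i) (pderivOp R i) :=
  fockForm_X_mul i

lemma isAdjointPair_fockForm_pderiv (i : σ) :
    IsAdjointPair (fockForm σ R) (fockForm σ R) (pderivOp R i) (mulX R i) := fun f g => by
  change fockForm σ R (pderiv i f) g = fockForm σ R f (X i * g)
  rw [fockForm_comm, ← fockForm_X_mul, fockForm_comm]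

lemma fockForm_nondegenerate [IsDomain R] [CharZero R] : (fockForm σ R).Nondegenerate := by
  refine (LinearMap.IsRefl.nondegenerate_iff_separatingRight
    fun f g h => by rwa [fockForm_comm]).mpr fun g hg => ?_
  ext α
  have h := hg (monomial α 1)
  rw [fockForm_monomial, one_mul, mul_eq_zero] at h
  simpa [factorialWeight, Finset.prod_eq_zero_iff, Nat.factorial_ne_zero] using h

lemma isAdjointPair_fockForm_shiftedX (c : R) (i : σ) :
    IsAdjointPair (fockForm σ R) (fockForm σ R)
      (shiftedX σ c i) (pderivOp R i + c • mulX R i) :=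
  (isAdjointPair_fockForm_X (R := R) i).add ((isAdjointPair_fockForm_pderiv i).smul c)

end Fock

section FourierForms

variable [Fintype σ] (i : σ)

variable (σ R) in
noncomputable def fourierForm₁ : LinearMap.BilinForm R (MvPolynomial σ R) :=
  (fockForm σ R).compl₁₂ (heatFlow σ 1) LinearMap.id

variable (σ R) in
noncomputable def fourierForm₂ : LinearMap.BilinForm R (MvPolynomial σ R) :=
  (fockForm σ R).compl₁₂ (heatFlow σ (-1)) (heatFlow σ (-1))

lemma fourierForm₁_nondegenerate [IsDomain R] [CharZero R] :
    (fourierForm₁ σ R).Nondegenerate :=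
  fockForm_nondegenerate.compl₁₂_of_bijective (heatFlow_bijective 1) Function.bijective_id

lemma fourierForm₂_nondegenerate [IsDomain R] [CharZero R] :
    (fourierForm₂ σ R).Nondegenerate :=
  fockForm_nondegenerate.compl₁₂_of_bijective (heatFlow_bijective (-1)) (heatFlow_bijective (-1))

lemma isAdjointPair_fourierForm₁_X :
    IsAdjointPair (fourierForm₁ σ R) (fourierForm₁ σ R) (mulX R i)
      (mulX R i + pderivOp R i) :=
  (isAdjointPair_fockForm_shiftedX 1 i).compl₁₂ (heatFlow_X_mul 1 i) fun g => by
    simp [add_comm]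

lemma isAdjointPair_fourierForm₁_pderiv :
    IsAdjointPair (fourierForm₁ σ R) (fourierForm₁ σ R) (pderivOp R i) (mulX R i) :=
  (isAdjointPair_fockForm_pderiv i).compl₁₂ (heatFlow_pderiv 1 i) fun _ => rfl

lemma isAdjointPair_fourierForm₁_X_sub_pderiv :
    IsAdjointPair (fourierForm₁ σ R) (fourierForm₁ σ R)
      (mulX R i - pderivOp R i) (pderivOp R i) := by
  simpa using (isAdjointPair_fourierForm₁_X (R := R) i).sub (isAdjointPair_fourierForm₁_pderiv i)

lemma isAdjointPair_fourierForm₂_pderiv :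
    IsAdjointPair (fourierForm₂ σ R) (fourierForm₂ σ R) (pderivOp R i)
      (mulX R i + pderivOp R i) :=
  (isAdjointPair_fockForm_pderiv i).compl₁₂ (heatFlow_pderiv (-1) i) fun g => by
    simp [heatFlow_X_mul, shiftedX_apply, heatFlow_pderiv]

lemma isAdjointPair_fourierForm₂_X :
    IsAdjointPair (fourierForm₂ σ R) (fourierForm₂ σ R) (mulX R i) (-mulX R i) :=
  (isAdjointPair_fockForm_shiftedX (-1) i).compl₁₂ (heatFlow_X_mul (-1) i) fun g => by
    simp [heatFlow_X_mul, shiftedX_apply]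

lemma isAdjointPair_fourierForm₂_neg_X :
    IsAdjointPair (fourierForm₂ σ R) (fourierForm₂ σ R) (-mulX R i) (mulX R i) := by
  simpa using (isAdjointPair_fourierForm₂_X (R := R) i).smul (-1)

lemma isAdjointPair_fourierForm₂_pderiv_add_X :
    IsAdjointPair (fourierForm₂ σ R) (fourierForm₂ σ R)
      (pderivOp R i + mulX R i) (pderivOp R i) := by
  simpa using (isAdjointPair_fourierForm₂_pderiv (R := R) i).add (isAdjointPair_fourierForm₂_X i)

end FourierForms

end MvPolynomial

namespace WeylAlgebra

open LinearMap

variable {n : ℕ} {B : LinearMap.BilinForm ℂ (MvPolynomial (Fin n) ℂ)}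

lemma forall_exists_isAdjointPair
    (hX : ∀ i, ∃ b : WeylAlgebra n, IsAdjointPair B B (weylX n i).val b.val)
    (hP : ∀ i, ∃ b : WeylAlgebra n, IsAdjointPair B B (weylP n i).val b.val) :
    ∀ a ∈ WeylAlgebra n, ∃ b ∈ WeylAlgebra n, IsAdjointPair B B a b := by
  refine fun _ => exists_isAdjointPair_of_mem_adjoin ?_
  rintro _ (⟨i, rfl⟩ | ⟨i, rfl⟩)
  · obtain ⟨b, h⟩ := hX i
    exact ⟨b, b.2, h⟩
  · obtain ⟨b, h⟩ := hP i
    exact ⟨b, b.2, h⟩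

lemma forall_exists_isAdjointPair'
    (hX : ∀ i, ∃ a : WeylAlgebra n, IsAdjointPair B B a.val (weylX n i).val)
    (hP : ∀ i, ∃ a : WeylAlgebra n, IsAdjointPair B B a.val (weylP n i).val) :
    ∀ b ∈ WeylAlgebra n, ∃ a ∈ WeylAlgebra n, IsAdjointPair B B a b := by
  refine fun _ => exists_isAdjointPair_of_mem_adjoin' ?_
  rintro _ (⟨i, rfl⟩ | ⟨i, rfl⟩)
  · obtain ⟨a, h⟩ := hX i
    exact ⟨a, a.2, h⟩
  · obtain ⟨a, h⟩ := hP i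
    exact ⟨a, a.2, h⟩

variable (n) in
noncomputable def fourierAdjoint₁ : WeylAlgebra n ≃ₐ[ℂ] (WeylAlgebra n)ᵐᵒᵖ :=
  adjointAlgEquiv _ _ fourierForm₁_nondegenerate
    (forall_exists_isAdjointPair (fun i => ⟨weylX n i + weylP n i, isAdjointPair_fourierForm₁_X i⟩)
      (fun i => ⟨weylX n i, isAdjointPair_fourierForm₁_pderiv i⟩))
    (forall_exists_isAdjointPair' (fun i => ⟨weylP n i, isAdjointPair_fourierForm₁_pderiv i⟩)
      (fun i => ⟨weylX n i - weylP n i, isAdjointPair_fourierForm₁_X_sub_pderiv i⟩))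

variable (n) in
noncomputable def fourierAdjoint₂ : WeylAlgebra n ≃ₐ[ℂ] (WeylAlgebra n)ᵐᵒᵖ :=
  adjointAlgEquiv _ _ fourierForm₂_nondegenerate
    (forall_exists_isAdjointPair (fun i => ⟨-weylX n i, isAdjointPair_fourierForm₂_X i⟩)
      (fun i => ⟨weylX n i + weylP n i, isAdjointPair_fourierForm₂_pderiv i⟩))
    (forall_exists_isAdjointPair' (fun i => ⟨-weylX n i, isAdjointPair_fourierForm₂_neg_X i⟩)
      (fun i => ⟨weylP n i + weylX n i, isAdjointPair_fourierForm₂_pderiv_add_X i⟩))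

variable (n) in
noncomputable def fourierTransform : WeylAlgebra n ≃ₐ[ℂ] WeylAlgebra n :=
  (fourierAdjoint₁ n).trans (fourierAdjoint₂ n).symm

lemma fourierTransform_weylX (i : Fin n) : fourierTransform n (weylX n i) = weylP n i := by
  rw [fourierTransform, AlgEquiv.trans_apply, AlgEquiv.symm_apply_eq, fourierAdjoint₁,
    fourierAdjoint₂, adjointAlgEquiv_apply_eq (b := weylX n i + weylP n i) _ _ _ _ _
      (isAdjointPair_fourierForm₁_X i),
    adjointAlgEquiv_apply_eq (b := weylX n i + weylP n i) _ _ _ _ _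
      (isAdjointPair_fourierForm₂_pderiv i)]

lemma fourierTransform_weylP (i : Fin n) : fourierTransform n (weylP n i) = -weylX n i := by
  rw [fourierTransform, AlgEquiv.trans_apply, AlgEquiv.symm_apply_eq, fourierAdjoint₁,
    fourierAdjoint₂, adjointAlgEquiv_apply_eq (b := weylX n i) _ _ _ _ _
      (isAdjointPair_fourierForm₁_pderiv i),
    adjointAlgEquiv_apply_eq (b := weylX n i) _ _ _ _ _ (isAdjointPair_fourierForm₂_neg_X i)]

end WeylAlgebra

theorem stmt_3_general (n : ℕ) :
    ∃ σ : WeylAlgebra n ≃ₐ[ℂ] WeylAlgebra n,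
      ∀ i : Fin n, σ (weylX n i) = weylP n i ∧ σ (weylP n i) = -(weylX n i) :=
  ⟨WeylAlgebra.fourierTransform n, fun i =>
    ⟨WeylAlgebra.fourierTransform_weylX i, WeylAlgebra.fourierTransform_weylP i⟩⟩

/-- Example 5.1.4: the Fourier transform. There is a `ℂ`-algebra automorphism `σ`
of the Weyl algebra `Aₙ(ℂ)` with `σ(xᵢ) = ∂ᵢ` and `σ(∂ᵢ) = -xᵢ` for all `i`. -/
theorem stmt_3 (n : ℕ) (hn : 0 < n) :
    ∃ σ : WeylAlgebra n ≃ₐ[ℂ] WeylAlgebra n,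
      ∀ i : Fin n, σ (weylX n i) = weylP n i ∧ σ (weylP n i) = -(weylX n i) :=
  stmt_3_general n
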